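/- arXiv:2304.13026 — 9 statements merged into one kernel-verified Lean document; each statement's English description precedes it below -/
import Mathlib

section
/- Lemma 5.6: For every λ ∈ ℝ, μ_MB(h) − μ_λ(h) = Σ_{k > 0} (𝕎(λ·k) − 1)·(h k − h (−k)), where the right-hand side is a finite sum of integers. -/
open scoped Classical

/-- The function `𝕎 : ℝ → ℤ`, equal to `2x` if `x ∈ ℤ` and `2⌊x⌋ + 1` otherwise. -/
noncomputable def Wfun (x : ℝ) : ℤ :=
  if Int.fract x = 0 then 2 * ⌊x⌋ else 2 * ⌊x⌋ + 1

/-- The index `μ_λ(h) = Σ_{k ≠ 0} (1 − 𝕎(λ·k))·(h k)`. -/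
noncomputable def muLam (l : ℝ) (h : ℤ →₀ ℕ) : ℤ :=
  ∑ k ∈ h.support.filter (fun k => k ≠ 0), (1 - Wfun (l * k)) * (h k : ℤ)

/-- The Morse–Bott index `μ_MB(h) = 2·Σ_{k < 0} h k`. -/
def muMB (h : ℤ →₀ ℕ) : ℤ := 2 * ∑ k ∈ h.support.filter (fun k => k < 0), (h k : ℤ)

theorem Wfun_neg (x : ℝ) : Wfun (-x) = - Wfun x := by
  unfold Wfun
  by_cases hx : Int.fract x = 0
  · rw [if_pos hx, if_pos (Int.fract_neg_eq_zero.2 hx)]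
    have hfloor : (⌊-x⌋ : ℝ) = -(⌊x⌋ : ℝ) := by
      have h1 : Int.fract (-x) = 0 := Int.fract_neg_eq_zero.2 hx
      simp only [Int.fract] at hx h1
      linarith
    have : ⌊-x⌋ = -⌊x⌋ := by exact_mod_cast hfloor
    rw [this]; ring
  · rw [if_neg hx, if_neg (fun hc => hx (Int.fract_neg_eq_zero.1 hc))]
    have h1 := Int.fract_neg hx
    have hfloor : (⌊-x⌋ : ℝ) = -(⌊x⌋ : ℝ) - 1 := by
      simp only [Int.fract] at h1
      linarith
    have : ⌊-x⌋ = -⌊x⌋ - 1 := by exact_mod_cast hfloor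
    rw [this]; ring

/-- Lemma 5.6: `μ_MB(h) − μ_λ(h) = Σ_{k > 0} (𝕎(λ·k) − 1)·(h k − h (−k))`, the sum on the
right being a finite sum over the positive weights of `h` (and negatives of negative ones). -/
theorem muMB_sub_muLam (h : ℤ →₀ ℕ) (l : ℝ) :
    muMB h - muLam l h =
      ∑ k ∈ (h.support ∪ h.support.image (fun k => -k)).filter (fun k => 0 < k),
        (Wfun (l * k) - 1) * ((h k : ℤ) - (h (-k) : ℤ)) := by
  set T := h.support ∪ h.support.image (fun k => -k) with hT
  have hsub : h.support ⊆ T := Finset.subset_union_left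
  have hzero : ∀ k : ℤ, k ∉ h.support → (h k : ℤ) = 0 := by
    intro k hk
    simpa using Finsupp.notMem_support_iff.1 hk
  have hsymm : ∀ k : ℤ, k ∈ T → -k ∈ T := by
    intro k hk
    rcases Finset.mem_union.1 hk with hk | hk
    · exact Finset.mem_union.2 (Or.inr (Finset.mem_image.2 ⟨k, hk, rfl⟩))
    · rcases Finset.mem_image.1 hk with ⟨j, hj, rfl⟩
      exact Finset.mem_union.2 (Or.inl (by simpa using hj))
  -- extend muLam sum to T
  have hmuLam : muLam l h = ∑ k ∈ T.filter (fun k => k ≠ 0), (1 - Wfun (l * k)) * (h k : ℤ) := by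
    unfold muLam
    apply Finset.sum_subset (Finset.filter_subset_filter _ hsub)
    intro x hx hnx
    have hxs : x ∉ h.support := fun hxs =>
      hnx (Finset.mem_filter.2 ⟨hxs, (Finset.mem_filter.1 hx).2⟩)
    rw [hzero x hxs, mul_zero]
  have hmuMB : muMB h = ∑ k ∈ T.filter (fun k => k < 0), 2 * (h k : ℤ) := by
    unfold muMB
    rw [Finset.mul_sum]
    apply Finset.sum_subset (Finset.filter_subset_filter _ hsub)
    intro x hx hnx
    have hxs : x ∉ h.support := fun hxs =>
      hnx (Finset.mem_filter.2 ⟨hxs, (Finset.mem_filter.1 hx).2⟩)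
    rw [hzero x hxs, mul_zero]
  -- split the muLam sum into negative and positive parts
  have hsplit : T.filter (fun k => k ≠ 0) =
      T.filter (fun k => k < 0) ∪ T.filter (fun k => 0 < k) := by
    rw [← Finset.filter_or]
    apply Finset.filter_congr
    intro k _
    omega
  have hdisj : Disjoint (T.filter (fun k => k < 0)) (T.filter (fun k => 0 < k)) := by
    rw [Finset.disjoint_left]
    intro a ha hb
    have h1 := (Finset.mem_filter.1 ha).2
    have h2 := (Finset.mem_filter.1 hb).2
    omega
  have hsum : ∑ k ∈ T.filter (fun k => k ≠ 0), (1 - Wfun (l * k)) * (h k : ℤ) =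
      ∑ k ∈ T.filter (fun k => k < 0), (1 - Wfun (l * k)) * (h k : ℤ) +
      ∑ k ∈ T.filter (fun k => 0 < k), (1 - Wfun (l * k)) * (h k : ℤ) := by
    rw [hsplit, Finset.sum_union hdisj]
  -- reindex negative sums by negation
  have hreindex : ∀ f : ℤ → ℤ,
      ∑ k ∈ T.filter (fun k => k < 0), f k = ∑ k ∈ T.filter (fun k => 0 < k), f (-k) := by
    intro f
    apply Finset.sum_nbij' (fun k => -k) (fun k => -k)
    · intro a ha
      rcases Finset.mem_filter.1 ha with ⟨h1, h2⟩
      exact Finset.mem_filter.2 ⟨hsymm a h1, by omega⟩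
    · intro a ha
      rcases Finset.mem_filter.1 ha with ⟨h1, h2⟩
      exact Finset.mem_filter.2 ⟨hsymm a h1, by omega⟩
    · intro a _; ring
    · intro a _; ring
    · intro a _; rw [neg_neg]
  rw [hmuLam, hmuMB, hsum, hreindex (fun k => 2 * (h k : ℤ)),
    hreindex (fun k => (1 - Wfun (l * k)) * (h k : ℤ))]
  rw [← Finset.sum_add_distrib, ← Finset.sum_sub_distrib]
  apply Finset.sum_congr rfl
  intro k _
  have hW : Wfun (l * (-k : ℤ)) = - Wfun (l * k) := by
    rw [show (l * ((-k : ℤ) : ℝ)) = -(l * k) by push_cast; ring, Wfun_neg]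
  rw [hW]
  ring
end

section
/- Corollary 5.7: Assume there exists a nonzero integer k with h k ≠ 0, and set λ_h := 1 / max{|k| : k ≠ 0 and h k ≠ 0}. Then μ_λ(h) = μ_MB(h) for all real λ with 0 < λ < λ_h, and for every natural number N, μ_λ(h) = μ_MB(h) − 2N·μ(h) for all real λ with N < λ < N + λ_h. -/
open scoped Classical

/-- The Maslov index `μ(h) = Σ_k k·(h k)`. -/
def maslov (h : ℤ →₀ ℕ) : ℤ := ∑ k ∈ h.support, k * (h k : ℤ)

lemma Wfun_between (m : ℤ) (x : ℝ) (h1 : (m : ℝ) < x) (h2 : x < m + 1) :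
    Wfun x = 2 * m + 1 := by
  have hf : ⌊x⌋ = m := by
    rw [Int.floor_eq_iff]
    exact ⟨le_of_lt h1, by exact_mod_cast h2⟩
  have hfr : Int.fract x ≠ 0 := by
    rw [Int.fract, hf]
    intro H
    have : x = (m : ℝ) := by linarith [sub_eq_zero.mp H]
    linarith
  simp [Wfun, hfr, hf]

lemma muLam_key (h : ℤ →₀ ℕ) (M : ℕ)
    (hM₂ : ∀ k : ℤ, k ≠ 0 → h k ≠ 0 → k.natAbs ≤ M) (hMpos : 0 < M)
    (N : ℕ) (l : ℝ) (hl1 : (N : ℝ) < l) (hl2 : l < (N : ℝ) + 1 / (M : ℝ)) :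
    muLam l h = muMB h - 2 * (N : ℤ) * maslov h := by
  have hMR : (0 : ℝ) < (M : ℝ) := by exact_mod_cast hMpos
  have hlM : l * M < (N : ℝ) * M + 1 := by
    have e : (1 / (M : ℝ)) * M = 1 := by field_simp
    nlinarith [mul_lt_mul_of_pos_right hl2 hMR]
  have step : ∀ k ∈ h.support.filter (fun k => k ≠ 0),
      (1 - Wfun (l * k)) * (h k : ℤ)
        = ((if k < 0 then 2 else 0) - 2 * (N : ℤ) * k) * (h k : ℤ) := by
    intro k hk
    simp only [Finset.mem_filter, Finsupp.mem_support_iff] at hk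
    obtain ⟨hk1, hk2⟩ := hk
    have hkM : |(k : ℝ)| ≤ M := by
      have h0 : |k| ≤ (M : ℤ) := by
        rw [Int.abs_eq_natAbs]; exact_mod_cast hM₂ k hk2 hk1
      exact_mod_cast h0
    rcases lt_or_gt_of_ne hk2 with hneg | hpos
    · -- k < 0
      have hkR : (k : ℝ) < 0 := by exact_mod_cast hneg
      have hkMge : (-(M : ℝ)) ≤ (k : ℝ) := (abs_le.mp hkM).1
      have hW : Wfun (l * k) = 2 * ((N : ℤ) * k - 1) + 1 := by
        apply Wfun_between
        · push_cast
          nlinarith [mul_lt_mul_of_neg_right hl2 hkR]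
        · push_cast
          nlinarith [mul_lt_mul_of_neg_right hl1 hkR]
      rw [hW]
      simp only [if_pos hneg]
      ring
    · -- k > 0
      have hkR : (0 : ℝ) < (k : ℝ) := by exact_mod_cast hpos
      have hkMle : (k : ℝ) ≤ M := (abs_le.mp hkM).2
      have hW : Wfun (l * k) = 2 * ((N : ℤ) * k) + 1 := by
        apply Wfun_between
        · push_cast
          nlinarith [mul_lt_mul_of_pos_right hl1 hkR]
        · push_cast
          nlinarith [mul_lt_mul_of_pos_right hl2 hkR,
            mul_le_mul_of_nonneg_left hkMle (le_of_lt (sub_pos.mpr hl1))]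
      rw [hW]
      have : ¬ (k < 0) := not_lt.mpr (le_of_lt hpos)
      simp only [if_neg this]
      ring
  unfold muLam
  rw [Finset.sum_congr rfl step]
  have expand : ∀ k ∈ h.support.filter (fun k => k ≠ 0),
      ((if k < 0 then 2 else 0) - 2 * (N : ℤ) * k) * (h k : ℤ)
        = (if k < 0 then 2 * (h k : ℤ) else 0) - 2 * (N : ℤ) * (k * (h k : ℤ)) := by
    intro k _; split_ifs <;> ring
  rw [Finset.sum_congr rfl expand, Finset.sum_sub_distrib]
  have e1 : ∑ k ∈ h.support.filter (fun k => k ≠ 0),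
      (if k < 0 then 2 * (h k : ℤ) else 0)
        = 2 * ∑ k ∈ h.support.filter (fun k => k < 0), (h k : ℤ) := by
    rw [← Finset.sum_filter, Finset.filter_filter, Finset.mul_sum]
    apply Finset.sum_congr _ (fun _ _ => rfl)
    apply Finset.filter_congr
    intro k _
    simp only [ne_eq, and_iff_right_iff_imp]
    intro hk; exact fun H => absurd H (by omega)
  have e2 : ∑ k ∈ h.support.filter (fun k => k ≠ 0), 2 * (N : ℤ) * (k * (h k : ℤ))
      = 2 * (N : ℤ) * ∑ k ∈ h.support, k * (h k : ℤ) := by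
    rw [← Finset.mul_sum]
    congr 1
    apply Finset.sum_filter_of_ne
    intro k _ hne
    intro h0; rw [h0] at hne; simp at hne
  rw [e1, e2, muMB, maslov]

/-- Corollary 5.7: with `λ_h := 1 / max{|k| : k ≠ 0, h k ≠ 0}` (here `M` is that maximum),
`μ_λ(h) = μ_MB(h)` for `0 < λ < λ_h`, and `μ_λ(h) = μ_MB(h) − 2N·μ(h)` for
`N < λ < N + λ_h`, for every natural number `N`. -/
theorem muLam_eq_of_small_slope (h : ℤ →₀ ℕ) (M : ℕ)
    (hM₁ : ∃ k : ℤ, k ≠ 0 ∧ h k ≠ 0 ∧ k.natAbs = M)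
    (hM₂ : ∀ k : ℤ, k ≠ 0 → h k ≠ 0 → k.natAbs ≤ M) :
    (∀ l : ℝ, 0 < l → l < 1 / (M : ℝ) → muLam l h = muMB h) ∧
    (∀ N : ℕ, ∀ l : ℝ, (N : ℝ) < l → l < (N : ℝ) + 1 / (M : ℝ) →
      muLam l h = muMB h - 2 * (N : ℤ) * maslov h) := by
  have hMpos : 0 < M := by
    obtain ⟨k, hk1, _, hk3⟩ := hM₁
    omega
  constructor
  · intro l hl1 hl2
    have := muLam_key h M hM₂ hMpos 0 l (by simpa using hl1) (by simpa using hl2)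
    simpa using this
  · intro N l hl1 hl2
    exact muLam_key h M hM₂ hMpos N l hl1 hl2
end

section
/- Lemma 5.17 (first formula): Let s ≥ 1 be an integer and suppose h satisfies the ω_ℂ-duality h k = h (s − k) for all k ∈ ℤ (as holds for the weight decomposition at any fixed component of a weight-s conical symplectic resolution). Then μ_{(1/s)⁺}(h) = −2·h 0. -/
open scoped Classical

/-- The one-sided index `μ_{λ⁺}(h)`, equal to `μ_{λ'}(h) = Σ_{k ≠ 0} (1 − 𝕎(λ'·k))·(h k)`
for `λ'` slightly above `λ`. -/
noncomputable def muPlus (l : ℝ) (h : ℤ →₀ ℕ) : ℤ :=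
  ∑ k ∈ h.support.filter (fun k => 0 < k), (1 - (2 * ⌊l * k⌋ + 1)) * (h k : ℤ) +
  ∑ k ∈ h.support.filter (fun k => k < 0), (1 - (2 * ⌈l * k⌉ - 1)) * (h k : ℤ)

/-- Lemma 5.17 (first formula): if `s ≥ 1` and `h` satisfies the `ω_ℂ`-duality
`h k = h (s − k)` for all `k`, then `μ_{(1/s)⁺}(h) = −2·h 0`. -/
theorem muPlus_one_div_s (h : ℤ →₀ ℕ) (s : ℤ) (hs : 1 ≤ s)
    (hdual : ∀ k : ℤ, h k = h (s - k)) :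
    muPlus (1 / (s : ℝ)) h = -2 * (h 0 : ℤ) := by
  classical
  have hs0 : (0:ℤ) < s := hs
  have hsR : (0:ℝ) < (s:ℝ) := by exact_mod_cast hs0
  have hsne : (s:ℝ) ≠ 0 := ne_of_gt hsR
  set F : ℤ → ℤ := fun k =>
    (if 0 < k then (1 - (2*⌊(1/(s:ℝ))*(k:ℝ)⌋+1))*(h k:ℤ) else 0) +
    (if k < 0 then (1 - (2*⌈(1/(s:ℝ))*(k:ℝ)⌉-1))*(h k:ℤ) else 0) -
    (if k = s then (-2)*(h s:ℤ) else 0) with hF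
  -- key cancellation lemma
  have key : ∀ k : ℤ, F k + F (s - k) = 0 := by
    intro k
    have hks : (h k : ℤ) = (h (s - k) : ℤ) := by rw [hdual k]
    have e1 : ⌊(1/(s:ℝ)) * ((s - k : ℤ):ℝ)⌋ = 1 - ⌈(1/(s:ℝ)) * (k:ℝ)⌉ := by
      have e : (1/(s:ℝ)) * ((s - k : ℤ):ℝ) = -((1/(s:ℝ)) * (k:ℝ)) + 1 := by
        push_cast; field_simp; ring
      rw [e, Int.floor_add_one, Int.floor_neg]; ring
    have e2 : ⌈(1/(s:ℝ)) * ((s - k : ℤ):ℝ)⌉ = 1 - ⌊(1/(s:ℝ)) * (k:ℝ)⌋ := by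
      have e : (1/(s:ℝ)) * ((s - k : ℤ):ℝ) = -((1/(s:ℝ)) * (k:ℝ)) + 1 := by
        push_cast; field_simp; ring
      rw [e, Int.ceil_add_one, Int.ceil_neg]; ring
    have floor0 : ∀ m : ℤ, 0 < m → m < s → ⌊(1/(s:ℝ)) * (m:ℝ)⌋ = 0 := by
      intro m hm1 hm2
      rw [one_div_mul_eq_div]
      rw [Int.floor_eq_zero_iff]
      constructor
      · positivity
      · rw [div_lt_one hsR]; exact_mod_cast hm2
    have floors : ⌊(1/(s:ℝ)) * ((s:ℤ):ℝ)⌋ = 1 := by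
      rw [one_div_mul_eq_div, div_self hsne]; exact Int.floor_one
    rcases lt_trichotomy k 0 with hk | hk | hk
    · -- k < 0, s - k > s
      have h1 : 0 < s - k := by omega
      have h2 : s - k ≠ s := by omega
      have h3 : ¬ (s - k < 0) := by omega
      have h4 : ¬ (0 < k) := by omega
      have h5 : k ≠ s := by omega
      simp only [hF, hk, h1, h2, h3, h4, h5, if_true, if_false, e1]
      rw [hks]; ring
    · -- k = 0, pair with s
      subst hk
      have h1 : ¬ ((0:ℤ) < 0) := by omega
      have h2 : ¬ ((0:ℤ) ≠ 0) := by omega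
      have h3 : (0:ℤ) ≠ s := by omega
      have h4 : 0 < s := hs0
      have h5 : ¬ (s < 0) := by omega
      simp only [hF, h1, h3, h4, h5, sub_zero, if_true, if_false, lt_irrefl, floors]
      ring
    · rcases lt_trichotomy k s with hk2 | hk2 | hk2
      · -- 0 < k < s, also 0 < s - k < s
        have f1 := floor0 k hk hk2
        have f2 := floor0 (s - k) (by omega) (by omega)
        have h1 : 0 < s - k := by omega
        have h2 : ¬ (k < 0) := by omega
        have h3 : ¬ (s - k < 0) := by omega
        have h4 : k ≠ s := by omega
        have h5 : s - k ≠ s := by omega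
        simp only [hF, hk, h1, h2, h3, h4, h5, if_true, if_false, f1, f2]
        push_cast
        ring
      · -- k = s, pair with 0
        subst hk2
        have h1 : ¬ ((0:ℤ) < 0) := by omega
        have h3 : (0:ℤ) ≠ k := by omega
        have h5 : ¬ (k < 0) := by omega
        simp only [hF, hk, h1, h3, h5, sub_self, if_true, if_false, lt_irrefl, floors]
        ring
      · -- k > s, s - k < 0
        have h1 : s - k < 0 := by omega
        have h2 : ¬ (0 < s - k) := by omega
        have h3 : k ≠ s := by omega
        have h4 : s - k ≠ s := by omega
        have h5 : ¬ (k < 0) := by omega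
        simp only [hF, hk, h1, h2, h3, h4, h5, if_true, if_false, e2]
        rw [hks]; ring
  -- the sum of F over the support vanishes
  have hsum0 : ∑ k ∈ h.support, F k = 0 := by
    refine Finset.sum_involution (fun a _ => s - a) (fun a _ => key a) ?_ ?_ ?_
    · intro a _ hFa
      show s - a ≠ a
      intro hcon
      have := key a
      rw [hcon] at this
      omega
    · intro a ha
      simp only [Finsupp.mem_support_iff] at ha ⊢
      rw [← hdual a]; exact ha
    · intro a ha
      simp
  -- rewrite muPlus as the sum of F plus the delta term
  have h0s : (h 0 : ℤ) = (h s : ℤ) := by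
    have := hdual 0
    rw [sub_zero] at this
    exact_mod_cast this
  have hdsum : ∑ k ∈ h.support, (if k = s then (-2)*(h s:ℤ) else 0) = -2 * (h 0 : ℤ) := by
    rw [Finset.sum_ite_eq' h.support s (fun _ => (-2)*(h s:ℤ))]
    by_cases hmem : s ∈ h.support
    · rw [if_pos hmem, h0s]
    · rw [if_neg hmem]
      have : h s = 0 := Finsupp.notMem_support_iff.mp hmem
      rw [h0s, this]
      simp
  have hmu : muPlus (1/(s:ℝ)) h =
      ∑ k ∈ h.support, F k + ∑ k ∈ h.support, (if k = s then (-2)*(h s:ℤ) else 0) := by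
    rw [muPlus, Finset.sum_filter, Finset.sum_filter, ← Finset.sum_add_distrib,
      ← Finset.sum_add_distrib]
    refine Finset.sum_congr rfl ?_
    intro k _
    simp only [hF]
    ring
  rw [hmu, hsum0, hdsum, zero_add]
end

section
/- Lemma 5.17 (second formula): Let s ≥ 1 be an integer and suppose h satisfies the ω_ℂ-duality h k = h (s − k) for all k ∈ ℤ. Then μ_{(2/s)⁺}(h) = −2·h 0 − Σ_{k ∈ ℤ} h k − h', where h' := h (s/2) if s is even and h' := 0 if s is odd. -/
open scoped Classical

-- floor of integer division cast to ℝ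
lemma floor_int_div_real (a b : ℤ) (hb : 0 < b) : ⌊(a : ℝ) / (b : ℝ)⌋ = a / b := by
  have hb' : (0:ℝ) < (b:ℝ) := by exact_mod_cast hb
  rw [Int.floor_eq_iff]
  constructor
  · rw [le_div_iff₀ hb']
    have h1 : b * (a / b) + a % b = a := Int.mul_ediv_add_emod a b
    have h2 : 0 ≤ a % b := Int.emod_nonneg a hb.ne'
    have : (a / b) * b ≤ a := by nlinarith [h1, h2]
    exact_mod_cast this
  · rw [div_lt_iff₀ hb']
    have h1 : b * (a / b) + a % b = a := Int.mul_ediv_add_emod a b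
    have h2 : a % b < b := Int.emod_lt_of_pos a hb
    have : a < (a / b + 1) * b := by nlinarith [h1, h2]
    exact_mod_cast this

lemma ediv_add_neg_ediv (a s : ℤ) (hs : 0 < s) :
    a / s + (-a) / s = if s ∣ a then 0 else -1 := by
  by_cases hd : s ∣ a
  · obtain ⟨c, rfl⟩ := hd
    rw [Int.mul_ediv_cancel_left _ hs.ne', ← Int.mul_neg, Int.mul_ediv_cancel_left _ hs.ne']
    simp
  · rw [if_neg hd]
    have h1 : s * (a / s) + a % s = a := Int.mul_ediv_add_emod a s
    have h2 : 0 ≤ a % s := Int.emod_nonneg a hs.ne'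
    have h3 : a % s < s := Int.emod_lt_of_pos a hs
    have h4 : a % s ≠ 0 := fun h => hd (Int.dvd_of_emod_eq_zero h)
    have : (-a) / s = -(a / s) - 1 := by
      have heq : -a = (s - a % s) + s * (-(a / s) - 1) := by linarith [h1]
      rw [heq, Int.add_mul_ediv_left _ _ hs.ne', Int.ediv_eq_zero_of_lt (by omega) (by omega)]
      ring
    omega

/-- Lemma 5.17 (second formula): if `s ≥ 1` and `h` satisfies the `ω_ℂ`-duality
`h k = h (s − k)` for all `k`, then `μ_{(2/s)⁺}(h) = −2·h 0 − Σ_k h k − h'`, where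
`h' = h (s/2)` if `s` is even and `h' = 0` if `s` is odd. -/
theorem muPlus_two_div_s (h : ℤ →₀ ℕ) (s : ℤ) (hs : 1 ≤ s)
    (hdual : ∀ k : ℤ, h k = h (s - k)) :
    muPlus (2 / (s : ℝ)) h =
      -2 * (h 0 : ℤ) - (∑ k ∈ h.support, (h k : ℤ)) -
        (if 2 ∣ s then (h (s / 2) : ℤ) else 0) := by
  have hs0 : (0:ℤ) < s := hs
  have hsne : (s:ℝ) ≠ 0 := by exact_mod_cast hs0.ne'
  set F : ℤ → ℤ := fun k => if 0 < k then -2*((2*k)/s) else if k < 0 then 2 + 2*((-(2*k))/s) else 0 with hF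
  have hfl : ∀ k : ℤ, ⌊2 / (s:ℝ) * k⌋ = (2*k)/s := by
    intro k
    have : 2 / (s:ℝ) * k = ((2*k : ℤ) : ℝ) / ((s:ℤ) : ℝ) := by push_cast; ring
    rw [this, floor_int_div_real _ _ hs0]
  have hcl : ∀ k : ℤ, ⌈2 / (s:ℝ) * k⌉ = -((-(2*k))/s) := by
    intro k
    have h1 : 2 / (s:ℝ) * k = -(((-(2*k) : ℤ) : ℝ) / ((s:ℤ) : ℝ)) := by push_cast; field_simp
    rw [h1, Int.ceil_neg, floor_int_div_real _ _ hs0]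
  -- Step A: rewrite muPlus as a single sum over the support
  have hA : muPlus (2 / (s:ℝ)) h = ∑ k ∈ h.support, F k * (h k : ℤ) := by
    rw [muPlus, ← Finset.sum_filter_add_sum_filter_not h.support (fun k => 0 < k)
        (fun k => F k * (h k : ℤ))]
    congr 1
    · apply Finset.sum_congr rfl
      intro k hk
      simp only [Finset.mem_filter] at hk
      rw [hfl k]
      simp only [hF, if_pos hk.2]
      ring
    · rw [← Finset.sum_filter_add_sum_filter_not (h.support.filter (fun k => ¬ 0 < k))
          (fun k => k < 0) (fun k => F k * (h k : ℤ))]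
      have e1 : (h.support.filter (fun k => ¬ 0 < k)).filter (fun k => k < 0)
          = h.support.filter (fun k => k < 0) := by
        ext k
        simp only [Finset.mem_filter]
        constructor
        · rintro ⟨⟨h1, _⟩, h3⟩; exact ⟨h1, h3⟩
        · rintro ⟨h1, h3⟩; exact ⟨⟨h1, by omega⟩, h3⟩
      have e2 : ∑ k ∈ (h.support.filter (fun k => ¬ 0 < k)).filter (fun k => ¬ k < 0),
          F k * (h k : ℤ) = 0 := by
        apply Finset.sum_eq_zero
        intro k hk
        simp only [Finset.mem_filter] at hk
        have : k = 0 := by omega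
        simp [hF, this]
      rw [e1, e2, add_zero]
      apply Finset.sum_congr rfl
      intro k hk
      simp only [Finset.mem_filter] at hk
      rw [hcl k]
      simp only [hF, if_neg (by omega : ¬ 0 < k), if_pos hk.2]
      ring
  -- Step B: reindex by the involution k ↦ s - k
  have hB : ∑ k ∈ h.support, F (s - k) * (h k : ℤ) = ∑ k ∈ h.support, F k * (h k : ℤ) := by
    apply Finset.sum_equiv (Equiv.subLeft s)
    · intro k
      simp only [Finsupp.mem_support_iff, Equiv.subLeft_apply]
      rw [← hdual k]
    · intro k _
      simp only [Equiv.subLeft_apply]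
      rw [← hdual k]
  -- Step C: double the sum
  have hC : 2 * ∑ k ∈ h.support, F k * (h k : ℤ)
      = ∑ k ∈ h.support, (F k + F (s - k)) * (h k : ℤ) := by
    simp_rw [add_mul]
    rw [Finset.sum_add_distrib, hB]
    ring
  -- Step D: pointwise evaluation of F k + F (s - k)
  have hG : ∀ k : ℤ, F k + F (s - k) = -2 - (if k = 0 then 2 else 0)
      - (if k = s then 2 else 0) - (if 2*k = s then 2 else 0) := by
    intro k
    have hFs : F s = -4 := by
      simp only [hF, if_pos hs0]
      rw [Int.mul_ediv_cancel 2 hs0.ne']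
      norm_num
    have hF0 : F 0 = 0 := by simp [hF]
    by_cases hk0 : k = 0
    · subst hk0
      rw [sub_zero, hF0, hFs, if_pos rfl, if_neg (by omega : ¬ (0:ℤ) = s),
        if_neg (by omega : ¬ 2*(0:ℤ) = s)]
      norm_num
    by_cases hks : k = s
    · rw [hks, sub_self, hF0, hFs, if_neg (by omega : ¬ s = 0), if_pos rfl,
        if_neg (by omega : ¬ 2*s = s)]
      norm_num
    by_cases hk2 : 2*k = s
    · have hkpos : 0 < k := by omega
      have hsk : s - k = k := by omega
      simp only [hF, hsk, if_pos hkpos]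
      rw [if_neg hk0, if_neg hks, if_pos hk2, hk2, Int.ediv_self hs0.ne']
      norm_num
    rw [if_neg hk0, if_neg hks, if_neg hk2]
    rcases lt_trichotomy k 0 with hneg | hzero | hpos
    · have hskpos : 0 < s - k := by omega
      have key : (2*(s-k))/s = (-(2*k))/s + 2 := by
        have : 2*(s-k) = -(2*k) + 2*s := by ring
        rw [this, Int.add_mul_ediv_right _ _ hs0.ne']
      simp only [hF, if_pos hskpos, if_neg (by omega : ¬ 0 < k), if_pos hneg, key]
      ring
    · exact absurd hzero hk0
    · rcases lt_or_gt_of_ne (fun h' => hks h') with hlt | hgt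
      · -- 0 < k < s
        have hskpos : 0 < s - k := by omega
        have hnd : ¬ s ∣ 2*k := by
          rintro ⟨c, hc⟩
          have h1 : 0 < s*c := by rw [← hc]; omega
          have h2 : s*c < 2*s := by rw [← hc]; omega
          have hc1 : c = 1 := by nlinarith
          rw [hc1, mul_one] at hc
          exact hk2 hc
        have key1 : (2*k)/s + (-(2*k))/s = -1 := by
          rw [ediv_add_neg_ediv _ _ hs0, if_neg hnd]
        have key2 : (2*(s-k))/s = (-(2*k))/s + 2 := by
          have : 2*(s-k) = -(2*k) + 2*s := by ring
          rw [this, Int.add_mul_ediv_right _ _ hs0.ne']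
        simp only [hF, if_pos hpos, if_pos hskpos, key2]
        linarith [key1]
      · -- k > s
        have hskneg : s - k < 0 := by omega
        have key : (-(2*(s-k)))/s = (2*k)/s + (-2) := by
          have : -(2*(s-k)) = 2*k + (-2)*s := by ring
          rw [this, Int.add_mul_ediv_right _ _ hs0.ne']
        simp only [hF, if_pos hpos, if_neg (by omega : ¬ 0 < s - k), if_pos hskneg, key]
        ring
  -- Step E: evaluate the doubled sum
  have hE : ∑ k ∈ h.support, (F k + F (s - k)) * (h k : ℤ)
      = -2 * (∑ k ∈ h.support, (h k : ℤ)) - 2 * (h 0 : ℤ) - 2 * (h s : ℤ)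
        - (if 2 ∣ s then 2 * (h (s/2) : ℤ) else 0) := by
    have hterm : ∀ k ∈ h.support, (F k + F (s - k)) * (h k : ℤ)
        = -2 * (h k : ℤ) - (if k = 0 then 2 * (h k : ℤ) else 0)
          - (if k = s then 2 * (h k : ℤ) else 0)
          - (if 2*k = s then 2 * (h k : ℤ) else 0) := by
      intro k _
      rw [hG k]
      split_ifs <;> ring
    rw [Finset.sum_congr rfl hterm]
    rw [Finset.sum_sub_distrib, Finset.sum_sub_distrib, Finset.sum_sub_distrib,
      ← Finset.mul_sum]
    have e0 : ∑ k ∈ h.support, (if k = 0 then 2 * (h k : ℤ) else 0) = 2 * (h 0 : ℤ) := by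
      rw [Finset.sum_ite_eq' h.support 0 (fun k => 2 * (h k : ℤ))]
      split_ifs with h0
      · rfl
      · simp [Finsupp.notMem_support_iff.mp h0]
    have es : ∑ k ∈ h.support, (if k = s then 2 * (h k : ℤ) else 0) = 2 * (h s : ℤ) := by
      rw [Finset.sum_ite_eq' h.support s (fun k => 2 * (h k : ℤ))]
      split_ifs with h0
      · rfl
      · simp [Finsupp.notMem_support_iff.mp h0]
    have e2 : ∑ k ∈ h.support, (if 2*k = s then 2 * (h k : ℤ) else 0)
        = (if 2 ∣ s then 2 * (h (s/2) : ℤ) else 0) := by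
      by_cases hd : 2 ∣ s
      · rw [if_pos hd]
        obtain ⟨c, rfl⟩ := hd
        have hc : (2*c)/2 = c := by omega
        rw [hc]
        have : ∀ k : ℤ, (2*k = 2*c) = (k = c) := by
          intro k; apply propext; omega
        simp_rw [this]
        rw [Finset.sum_ite_eq' h.support c (fun k => 2 * (h k : ℤ))]
        split_ifs with h0
        · rfl
        · simp [Finsupp.notMem_support_iff.mp h0]
      · rw [if_neg hd]
        apply Finset.sum_eq_zero
        intro k _
        rw [if_neg]
        intro hc
        exact hd ⟨k, hc.symm⟩
    rw [e0, es, e2]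
  -- finish
  have hss : (h s : ℤ) = (h 0 : ℤ) := by
    have := hdual 0
    simp at this
    rw [this]
  rw [hA]
  have h2 : 2 * ∑ k ∈ h.support, F k * (h k : ℤ)
      = -2 * (∑ k ∈ h.support, (h k : ℤ)) - 2 * (h 0 : ℤ) - 2 * (h 0 : ℤ)
        - (if 2 ∣ s then 2 * (h (s/2) : ℤ) else 0) := by
    rw [hC, hE, hss]
  split_ifs at h2 ⊢ with hd
  · linarith
  · linarith
end

section
/- Lemma 5.17 (third formula): Let s ≥ 3 be an integer and suppose h satisfies the ω_ℂ-duality h k = h (s − k) for all k ∈ ℤ. Then μ_{(1/(s−1))⁺}(h) = −2·h 0 − 2·h 1 − 2·Σ_{j ≥ 2} h ((s−1)·j). -/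
open scoped Classical

private lemma ediv_aux {d q r : ℤ} (hd : 0 < d) (hr0 : 0 ≤ r) (hr : r < d) :
    (d * q + r) / d = q := by
  rw [add_comm, Int.add_mul_ediv_left _ _ (by omega : d ≠ 0),
    Int.ediv_eq_zero_of_lt hr0 hr, zero_add]

private lemma floor_div_real (d k : ℤ) (hd : 0 < d) :
    ⌊(k : ℝ) / (d : ℝ)⌋ = k / d := by
  have hdR : (0:ℝ) < (d:ℝ) := by exact_mod_cast hd
  have hid : d * (k / d) + k % d = k := Int.mul_ediv_add_emod k d
  have hr0 : 0 ≤ k % d := Int.emod_nonneg k (by omega)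
  have hrd : k % d < d := Int.emod_lt_of_pos k hd
  rw [Int.floor_eq_iff]
  constructor
  · rw [le_div_iff₀ hdR]
    have : (k / d) * d ≤ k := by nlinarith
    exact_mod_cast this
  · rw [div_lt_iff₀ hdR]
    have : k < (k / d + 1) * d := by nlinarith
    exact_mod_cast this

private lemma ceil_div_real (d k : ℤ) (hd : 0 < d) :
    ⌈(k : ℝ) / (d : ℝ)⌉ = -((-k) / d) := by
  have : ⌊-((k : ℝ) / (d : ℝ))⌋ = -⌈(k : ℝ) / (d : ℝ)⌉ := Int.floor_neg
  have h2 : ⌊((-k : ℤ) : ℝ) / (d : ℝ)⌋ = (-k) / d := floor_div_real d (-k) hd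
  rw [Int.cast_neg, neg_div] at h2
  omega

private lemma ediv_sub_one {d : ℤ} (k : ℤ) (hd : 0 < d) :
    k / d - (k - 1) / d = if d ∣ k then 1 else 0 := by
  have hid : d * (k / d) + k % d = k := Int.mul_ediv_add_emod k d
  have hr0 : 0 ≤ k % d := Int.emod_nonneg k (by omega)
  have hrd : k % d < d := Int.emod_lt_of_pos k hd
  rcases em (d ∣ k) with hdvd | hdvd
  · rw [if_pos hdvd]
    have hr : k % d = 0 := Int.emod_eq_zero_of_dvd hdvd
    have h1 : k - 1 = d * (k / d - 1) + (d - 1) := by ring_nf; omega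
    rw [h1, ediv_aux hd (by omega) (by omega)]
    ring
  · rw [if_neg hdvd]
    have hr : k % d ≠ 0 := fun hc => hdvd (Int.dvd_of_emod_eq_zero hc)
    have h1 : k - 1 = d * (k / d) + (k % d - 1) := by omega
    rw [h1, ediv_aux hd (by omega) (by omega)]
    ring

/-- Lemma 5.17 (third formula): if `s ≥ 3` and `h` satisfies the `ω_ℂ`-duality
`h k = h (s − k)` for all `k`, then
`μ_{(1/(s−1))⁺}(h) = −2·h 0 − 2·h 1 − 2·Σ_{j ≥ 2} h ((s−1)·j)`.
The sum over `j ≥ 2` is finite (terms vanish beyond the largest absolute weight). -/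
theorem muPlus_one_div_s_sub_one (h : ℤ →₀ ℕ) (s : ℤ) (hs : 3 ≤ s)
    (hdual : ∀ k : ℤ, h k = h (s - k)) :
    muPlus (1 / ((s : ℝ) - 1)) h =
      -2 * (h 0 : ℤ) - 2 * (h 1 : ℤ) -
        2 * ∑ j ∈ Finset.Icc (2 : ℤ) ((h.support.sup Int.natAbs : ℕ) : ℤ), (h ((s - 1) * j) : ℤ) := by
  classical
  have hd : (0:ℤ) < s - 1 := by omega
  set S := h.support with hS
  set M : ℕ := h.support.sup Int.natAbs with hM
  have hbound : ∀ k ∈ S, k.natAbs ≤ M := fun k hk => Finset.le_sup hk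
  have hcast : ∀ k : ℤ, (1 / ((s:ℝ) - 1)) * (k:ℝ) = (k:ℝ) / (((s-1 : ℤ)):ℝ) := by
    intro k; push_cast; ring
  have hfl : ∀ k : ℤ, ⌊(1 / ((s:ℝ) - 1)) * (k:ℝ)⌋ = k / (s-1) := by
    intro k; rw [hcast]; exact floor_div_real _ _ hd
  have hce : ∀ k : ℤ, ⌈(1 / ((s:ℝ) - 1)) * (k:ℝ)⌉ = -((-k) / (s-1)) := by
    intro k; rw [hcast]; exact ceil_div_real _ _ hd
  have hmemS : ∀ k : ℤ, k ∈ S ↔ s - k ∈ S := by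
    intro k
    simp only [hS, Finsupp.mem_support_iff]
    rw [← hdual k]
  rw [muPlus]
  -- positive sum with simplified coefficients
  have e1 : ∑ k ∈ S.filter (fun k => 0 < k), (1 - (2 * ⌊(1/((s:ℝ)-1)) * k⌋ + 1)) * (h k:ℤ)
      = ∑ k ∈ S.filter (fun k => 0 < k), (-2 * (k/(s-1))) * (h k:ℤ) :=
    Finset.sum_congr rfl (fun k _ => by rw [hfl k]; ring)
  -- negative sum: reindex by k ↦ s - k
  have e2 : ∑ k ∈ S.filter (fun k => k < 0), (1 - (2 * ⌈(1/((s:ℝ)-1)) * k⌉ - 1)) * (h k:ℤ)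
      = ∑ m ∈ S.filter (fun m => s < m), (2 * ((m-1)/(s-1))) * (h m:ℤ) := by
    refine Finset.sum_nbij' (i := fun k => s - k) (j := fun m => s - m) ?_ ?_ ?_ ?_ ?_
    · intro k hk
      simp only [Finset.mem_filter] at hk ⊢
      exact ⟨(hmemS k).1 hk.1, by omega⟩
    · intro m hm
      simp only [Finset.mem_filter] at hm ⊢
      refine ⟨?_, by omega⟩
      have := (hmemS (s - m)).2
      simp only [sub_sub_cancel] at this
      exact this hm.1
    · intro k _; ring
    · intro m _; ring
    · intro k hk
      simp only [Finset.mem_filter] at hk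
      rw [hce k, ← hdual k]
      have harith : (s - k - 1) / (s - 1) = (-k) / (s-1) + 1 := by
        have : s - k - 1 = -k + 1 * (s - 1) := by ring
        rw [this, Int.add_mul_ediv_right _ _ (by omega : s - 1 ≠ 0)]
      rw [harith]
      ring
  rw [e1, e2]
  -- split the positive sum at s
  rw [← Finset.sum_filter_add_sum_filter_not (S.filter (fun k => 0 < k)) (fun k => k ≤ s)
    (fun k => (-2 * (k/(s-1))) * (h k:ℤ))]
  have hset : (S.filter (fun k => 0 < k)).filter (fun k => ¬ k ≤ s)
      = S.filter (fun m => s < m) := by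
    ext k
    simp only [Finset.mem_filter, not_le]
    exact ⟨fun ⟨⟨a, _⟩, c⟩ => ⟨a, c⟩, fun ⟨a, c⟩ => ⟨⟨a, by omega⟩, c⟩⟩
  rw [hset]
  -- combine the two sums over {s < k}
  have e5 : ∑ m ∈ S.filter (fun m => s < m), (-2 * (m/(s-1))) * (h m:ℤ)
      + ∑ m ∈ S.filter (fun m => s < m), (2 * ((m-1)/(s-1))) * (h m:ℤ)
      = -2 * ∑ k ∈ (S.filter (fun m => s < m)).filter (fun k => (s-1) ∣ k), (h k:ℤ) := by
    have hrhs : (-2:ℤ) * ∑ k ∈ (S.filter (fun m => s < m)).filter (fun k => (s-1) ∣ k), (h k:ℤ)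
        = ∑ k ∈ S.filter (fun m => s < m), (if (s-1) ∣ k then (-2) * (h k:ℤ) else 0) := by
      rw [Finset.mul_sum, Finset.sum_filter]
    rw [hrhs, ← Finset.sum_add_distrib]
    refine Finset.sum_congr rfl (fun k _ => ?_)
    have hdk := ediv_sub_one k hd
    rcases em ((s-1) ∣ k) with hdvd | hdvd
    · rw [if_pos hdvd] at hdk ⊢
      have hk : k/(s-1) = (k-1)/(s-1) + 1 := by linarith
      rw [hk]; ring
    · rw [if_neg hdvd] at hdk ⊢
      have hk : k/(s-1) = (k-1)/(s-1) := by linarith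
      rw [hk]; ring
  -- evaluate the middle range 0 < k ≤ s
  have e6 : ∑ k ∈ (S.filter (fun k => 0 < k)).filter (fun k => k ≤ s),
      (-2 * (k/(s-1))) * (h k:ℤ) = -2 * (h (s-1):ℤ) - 2 * (h s:ℤ) := by
    have hcoef : ∀ k ∈ (S.filter (fun k => 0 < k)).filter (fun k => k ≤ s),
        (-2 * (k/(s-1))) * (h k:ℤ)
          = (if k = s-1 then (-2) * (h k:ℤ) else 0) + (if k = s then (-2) * (h k:ℤ) else 0) := by
      intro k hk
      simp only [Finset.mem_filter] at hk
      obtain ⟨⟨_, hk0⟩, hks⟩ := hk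
      rcases em (k = s - 1) with h1 | h1
      · rw [if_pos h1, if_neg (by omega), h1, Int.ediv_self (by omega)]; ring
      · rcases em (k = s) with h2 | h2
        · have hsdiv : s / (s - 1) = 1 := by
            calc s / (s-1) = ((s-1) * 1 + 1) / (s-1) := by norm_num
            _ = 1 := ediv_aux hd (by omega) (by omega)
          rw [if_neg h1, if_pos h2, h2, hsdiv]; ring
        · rw [if_neg h1, if_neg h2, Int.ediv_eq_zero_of_lt (by omega) (by omega)]; ring
    rw [Finset.sum_congr rfl hcoef, Finset.sum_add_distrib,
      Finset.sum_ite_eq' _ (s-1) (fun k => (-2) * (h k:ℤ)),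
      Finset.sum_ite_eq' _ s (fun k => (-2) * (h k:ℤ))]
    have hv : ∀ a : ℤ, 0 < a → a ≤ s →
        (if a ∈ (S.filter (fun k => 0 < k)).filter (fun k => k ≤ s)
          then (-2) * (h a:ℤ) else 0) = -2 * (h a:ℤ) := by
      intro a ha0 has
      rcases em (a ∈ (S.filter (fun k => 0 < k)).filter (fun k => k ≤ s)) with hmem | hmem
      · rw [if_pos hmem]
      · rw [if_neg hmem]
        simp only [Finset.mem_filter, hS, Finsupp.mem_support_iff] at hmem
        have : h a = 0 := by
          by_contra hc
          exact hmem ⟨⟨hc, ha0⟩, has⟩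
        rw [this]; simp
    rw [hv (s-1) (by omega) (by omega), hv s (by omega) (by omega)]
    ring
  -- reindex the divisible part by j ↦ (s-1)*j
  have e7 : ∑ k ∈ (S.filter (fun m => s < m)).filter (fun k => (s-1) ∣ k), (h k:ℤ)
      = ∑ j ∈ Finset.Icc (2 : ℤ) (M : ℤ), (h ((s - 1) * j) : ℤ) := by
    rw [← Finset.sum_subset
      (Finset.filter_subset (fun j => (s-1)*j ∈ S) (Finset.Icc (2 : ℤ) (M : ℤ)))
      (fun j hj hnj => by
        simp only [Finset.mem_filter, hj, true_and] at hnj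
        simp only [hS, Finsupp.mem_support_iff, not_not] at hnj
        exact_mod_cast congrArg (Nat.cast : ℕ → ℤ) hnj)]
    refine (Finset.sum_nbij' (i := fun k => k / (s-1)) (j := fun j => (s-1) * j) ?_ ?_ ?_ ?_ ?_)
    · intro k hk
      simp only [Finset.mem_filter, Finset.mem_Icc] at hk ⊢
      obtain ⟨⟨hkS, hks⟩, hdvd⟩ := hk
      obtain ⟨j, rfl⟩ := hdvd
      rw [Int.mul_ediv_cancel_left _ (by omega : s - 1 ≠ 0)]
      have hj2 : 2 ≤ j := by
        by_contra hc
        push_neg at hc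
        have : (s-1) * j ≤ (s-1) * 1 := mul_le_mul_of_nonneg_left (by omega) (by omega)
        linarith
      have habs : ((s-1) * j).natAbs ≤ M := hbound _ hkS
      have hkM' : (s-1) * j ≤ (M : ℤ) :=
        le_trans Int.le_natAbs (by exact_mod_cast habs)
      have hjM : j ≤ (M : ℤ) := by
        have : j ≤ (s-1) * j := le_mul_of_one_le_left (by omega) (by omega)
        linarith
      exact ⟨⟨hj2, hjM⟩, hkS⟩
    · intro j hj
      simp only [Finset.mem_filter, Finset.mem_Icc] at hj ⊢
      obtain ⟨⟨hj2, _⟩, hjS⟩ := hj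
      have : (s-1) * 2 ≤ (s-1) * j := mul_le_mul_of_nonneg_left hj2 (by omega)
      exact ⟨⟨hjS, by linarith⟩, ⟨j, rfl⟩⟩
    · intro k hk
      simp only [Finset.mem_filter] at hk
      exact Int.mul_ediv_cancel' hk.2
    · intro j _
      exact Int.mul_ediv_cancel_left _ (by omega : s - 1 ≠ 0)
    · intro k hk
      simp only [Finset.mem_filter] at hk
      rw [Int.mul_ediv_cancel' hk.2]
  rw [e6]
  have h0 : (h s : ℤ) = (h 0 : ℤ) := by
    have := hdual 0; simp only [sub_zero] at this; exact_mod_cast this.symm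
  have h1 : (h (s-1) : ℤ) = (h 1 : ℤ) := by exact_mod_cast (hdual 1).symm
  linarith [e5, e7]
end

section
/- Appendix B.3 (leading-term kernels): Let V be a finite-dimensional 𝔹-vector space, W the K-module of V-valued Hahn series, C : V → V a 𝔹-linear map, and Q : W → W a K-linear map such that for every v ∈ V (regarded as the constant series supported at exponent 0), the element Q(v) − C(v) is either zero or has support contained in (0, ∞). Then for every integer N ≥ 1 and every nonzero x ∈ W with Q^N(x) = 0, one has C^N(ini(x)) = 0; that is, ini(ker Q^N) ⊆ ker C^N. -/
open scoped Classical

/-- `V`-valued Hahn series form an additive group when `V` does (transferred through the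
`HahnModule` type synonym). -/
instance {Γ R V : Type*} [PartialOrder Γ] [AddCommGroup V] [SMul R V] :
    AddCommGroup (HahnModule Γ R V) :=
  inferInstanceAs (AddCommGroup (HahnSeries Γ V))

/-- The initial (leading) coefficient of a `V`-valued Hahn series, i.e. the coefficient of the
least exponent of its support; `ini 0 = 0`. -/
noncomputable def ini {𝔹 V : Type*} [Field 𝔹] [AddCommGroup V] [Module 𝔹 V]
    (x : HahnModule ℝ 𝔹 V) : V :=
  ((HahnModule.of 𝔹).symm x).leadingCoeff

/-- The embedding of `V` into `V`-valued Hahn series as the series supported at exponent `0`. -/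
noncomputable def emb {𝔹 V : Type*} [Field 𝔹] [AddCommGroup V] [Module 𝔹 V]
    (v : V) : HahnModule ℝ 𝔹 V :=
  HahnModule.of 𝔹 (HahnSeries.single (0 : ℝ) v)

section Aux

variable {𝔹 V : Type*} [Field 𝔹] [AddCommGroup V] [Module 𝔹 V]

lemma smul_emb_coeff (f : HahnSeries ℝ 𝔹) (v : V) (t : ℝ) :
    ((HahnModule.of 𝔹).symm (f • (emb v : HahnModule ℝ 𝔹 V))).coeff t = f.coeff t • v := by
  classical
  have hs : ({(0:ℝ)} : Set ℝ).IsPWO := (Set.finite_singleton _).isPWO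
  have hys : ((HahnModule.of 𝔹).symm (emb v : HahnModule ℝ 𝔹 V)).support ⊆ {(0:ℝ)} := by
    simp only [emb, Equiv.symm_apply_apply]
    exact HahnSeries.support_single_subset
  rw [HahnModule.coeff_smul_right hs hys]
  have hsub : (Finset.VAddAntidiagonal t (Set.VAddAntidiagonal.finite_of_isPWO f.isPWO_support hs t)) ⊆ {(t, (0:ℝ))} := by
    intro p hp
    rw [Finset.mem_vaddAntidiagonal] at hp
    obtain ⟨h1, h2, h3⟩ := hp
    simp only [Set.mem_singleton_iff] at h2
    have hpt : p.1 = t := by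
      have := h3; rw [h2] at this; simpa [vadd_eq_add] using this
    simp [Finset.mem_singleton, Prod.ext_iff, hpt, h2]
  rw [Finset.sum_subset hsub]
  · simp [emb, Equiv.symm_apply_apply]
  · intro p hp hnp
    rw [Finset.mem_singleton] at hp
    subst hp
    rw [Finset.mem_vaddAntidiagonal] at hnp
    simp only [Set.mem_singleton_iff, vadd_eq_add, add_zero, and_true, true_and,
      HahnSeries.mem_support, not_and, not_not] at hnp
    simp [hnp]

lemma smul_coeff_eq_zero' {f : HahnSeries ℝ 𝔹} {z : HahnModule ℝ 𝔹 V} {g t : ℝ}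
    (hf : f.support ⊆ Set.Ici g) (hz : ((HahnModule.of 𝔹).symm z).support ⊆ Set.Ioi 0)
    (ht : t ≤ g) : ((HahnModule.of 𝔹).symm (f • z)).coeff t = 0 := by
  rw [HahnModule.coeff_smul]
  apply Finset.sum_eq_zero
  intro p hp
  rw [Finset.mem_vaddAntidiagonal] at hp
  obtain ⟨h1, h2, h3⟩ := hp
  exfalso
  have hg : g ≤ p.1 := hf h1
  have h0 : (0:ℝ) < p.2 := hz h2
  have hpt : p.1 + p.2 = t := h3
  linarith

/-- the `i`-th component series of `y` w.r.t. a basis `b`. -/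
noncomputable def compSeries {ι : Type*} (b : Module.Basis ι 𝔹 V) (y : HahnModule ℝ 𝔹 V) (i : ι) :
    HahnSeries ℝ 𝔹 where
  coeff t := b.repr (((HahnModule.of 𝔹).symm y).coeff t) i
  isPWO_support' := ((HahnModule.of 𝔹).symm y).isPWO_support.mono (by
    intro t ht
    simp only [Function.mem_support] at ht ⊢
    intro h
    apply ht
    rw [h]; simp)

lemma compSeries_support {ι : Type*} (b : Module.Basis ι 𝔹 V) (y : HahnModule ℝ 𝔹 V) (i : ι) :
    (compSeries b y i).support ⊆ ((HahnModule.of 𝔹).symm y).support := by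
  intro t ht
  simp only [HahnSeries.mem_support, compSeries] at ht ⊢
  intro h
  apply ht; rw [h]; simp

lemma of_symm_sum {ι : Type*} (s : Finset ι) (F : ι → HahnModule ℝ 𝔹 V) :
    (HahnModule.of 𝔹).symm (∑ i ∈ s, F i) = ∑ i ∈ s, (HahnModule.of 𝔹).symm (F i) := by
  classical
  induction s using Finset.induction with
  | empty => simp
  | insert a s h ih => simp [Finset.sum_insert h, ih]

lemma hahn_sum_coeff {W : Type*} [AddCommGroup W] {ι : Type*} (s : Finset ι)
    (F : ι → HahnSeries ℝ W) (t : ℝ) :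
    (∑ i ∈ s, F i).coeff t = ∑ i ∈ s, (F i).coeff t := by
  classical
  induction s using Finset.induction with
  | empty => simp
  | insert a s h ih => simp [Finset.sum_insert h, HahnSeries.coeff_add, ih]

lemma decomp {ι : Type*} [Fintype ι] (b : Module.Basis ι 𝔹 V) (y : HahnModule ℝ 𝔹 V) :
    y = ∑ i, compSeries b y i • emb (b i) := by
  apply ((HahnModule.of 𝔹).symm.injective)
  ext t
  rw [of_symm_sum, hahn_sum_coeff]
  have h : ∀ i, ((HahnModule.of 𝔹).symm (compSeries b y i • emb (b i))).coeff t
      = b.repr (((HahnModule.of 𝔹).symm y).coeff t) i • b i := by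
    intro i; rw [smul_emb_coeff]; rfl
  simp only [h]
  exact (b.sum_repr _).symm

lemma key_step [FiniteDimensional 𝔹 V]
    (C : V →ₗ[𝔹] V)
    (Q : HahnModule ℝ 𝔹 V →ₗ[HahnSeries ℝ 𝔹] HahnModule ℝ 𝔹 V)
    (hQC : ∀ v : V,
      (HahnModule.of 𝔹).symm (Q (emb v)) - HahnSeries.single (0 : ℝ) (C v) = 0 ∨
      ((HahnModule.of 𝔹).symm (Q (emb v)) - HahnSeries.single (0 : ℝ) (C v)).support ⊆
        Set.Ioi (0 : ℝ))
    {g : ℝ} {y : HahnModule ℝ 𝔹 V}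
    (hy : ((HahnModule.of 𝔹).symm y).support ⊆ Set.Ici g)
    {t : ℝ} (ht : t ≤ g) :
    ((HahnModule.of 𝔹).symm (Q y)).coeff t = C (((HahnModule.of 𝔹).symm y).coeff t) := by
  classical
  set b := Module.finBasis 𝔹 V with hb
  have hQy : Q y = ∑ i, compSeries b y i • Q (emb (b i)) := by
    conv_lhs => rw [decomp b y]
    rw [map_sum]
    simp only [map_smul]
  set r : Fin (Module.finrank 𝔹 V) → HahnSeries ℝ V := fun i =>
    (HahnModule.of 𝔹).symm (Q (emb (b i))) - HahnSeries.single (0 : ℝ) (C (b i)) with hr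
  have hrsupp : ∀ i, (r i).support ⊆ Set.Ioi 0 := by
    intro i
    rcases hQC (b i) with h | h
    · rw [hr]; simp only [h]
      simp
    · exact h
  have hQemb : ∀ i, Q (emb (b i)) = emb (C (b i)) + HahnModule.of 𝔹 (r i) := by
    intro i
    apply ((HahnModule.of 𝔹).symm.injective)
    rw [HahnModule.of_symm_add]
    simp only [emb, Equiv.symm_apply_apply, hr]
    abel
  rw [hQy, of_symm_sum, hahn_sum_coeff]
  have hcoeff : ∀ i, ((HahnModule.of 𝔹).symm (compSeries b y i • Q (emb (b i)))).coeff t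
      = (compSeries b y i).coeff t • C (b i) := by
    intro i
    rw [hQemb i, smul_add, HahnModule.of_symm_add, HahnSeries.coeff_add, smul_emb_coeff,
      smul_coeff_eq_zero' ((compSeries_support b y i).trans hy)
        (by rw [Equiv.symm_apply_apply]; exact hrsupp i) ht, add_zero]
  simp only [hcoeff]
  have : ∀ i, (compSeries b y i).coeff t • C (b i)
      = C ((b.repr (((HahnModule.of 𝔹).symm y).coeff t) i) • b i) := by
    intro i; rw [map_smul]; rfl
  simp only [this]
  rw [← map_sum, b.sum_repr]

end Aux

/-- Appendix B.3 (leading-term kernels): let `V` be a finite-dimensional `𝔹`-vector space,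
`W` the `K`-module of `V`-valued Hahn series, `C : V → V` a `𝔹`-linear map and `Q : W → W` a
`K`-linear map such that for every `v ∈ V ⊆ W` the element `Q v − C v` is either zero or
supported in `(0, ∞)`. Then for every `N ≥ 1`, `ini (ker Q^N) ⊆ ker C^N`: every nonzero
`x` with `Q^N x = 0` satisfies `C^N (ini x) = 0`. -/
theorem ini_ker_pow_subset_ker_pow {𝔹 V : Type*} [Field 𝔹] [AddCommGroup V] [Module 𝔹 V]
    [FiniteDimensional 𝔹 V]
    (C : V →ₗ[𝔹] V)
    (Q : HahnModule ℝ 𝔹 V →ₗ[HahnSeries ℝ 𝔹] HahnModule ℝ 𝔹 V)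
    (hQC : ∀ v : V,
      (HahnModule.of 𝔹).symm (Q (emb v)) - HahnSeries.single (0 : ℝ) (C v) = 0 ∨
      ((HahnModule.of 𝔹).symm (Q (emb v)) - HahnSeries.single (0 : ℝ) (C v)).support ⊆
        Set.Ioi (0 : ℝ)) :
    ∀ N : ℕ, 1 ≤ N → ∀ x : HahnModule ℝ 𝔹 V, x ≠ 0 → (Q ^ N) x = 0 →
      (C ^ N) (ini x) = 0 := by
  intro N _ x hx hQN
  set g : ℝ := ((HahnModule.of 𝔹).symm x).order with hg
  have main : ∀ k : ℕ,
      ((HahnModule.of 𝔹).symm ((Q ^ k) x)).support ⊆ Set.Ici g ∧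
      ∀ t ≤ g, ((HahnModule.of 𝔹).symm ((Q ^ k) x)).coeff t
        = (C ^ k) (((HahnModule.of 𝔹).symm x).coeff t) := by
    intro k
    induction k with
    | zero =>
      simp only [pow_zero, Module.End.one_apply]
      constructor
      · intro t ht
        exact HahnSeries.order_le_of_coeff_ne_zero ht
      · intro t _; trivial
    | succ k ih =>
      have happ : (Q ^ (k + 1)) x = Q ((Q ^ k) x) := by
        rw [pow_succ' Q k, Module.End.mul_apply]
      have hcoeff : ∀ t ≤ g, ((HahnModule.of 𝔹).symm ((Q ^ (k + 1)) x)).coeff t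
          = (C ^ (k + 1)) (((HahnModule.of 𝔹).symm x).coeff t) := by
        intro t ht
        rw [happ, key_step C Q hQC ih.1 ht, ih.2 t ht, pow_succ' C k, Module.End.mul_apply]
      refine ⟨?_, hcoeff⟩
      intro t ht
      by_contra hcon
      simp only [Set.mem_Ici, not_le] at hcon
      have hxt : ((HahnModule.of 𝔹).symm x).coeff t = 0 := by
        by_contra h
        exact absurd (HahnSeries.order_le_of_coeff_ne_zero h) (not_le.2 hcon)
      have := hcoeff t hcon.le
      rw [hxt, map_zero] at this
      exact ht this
  have hle : ((HahnModule.of 𝔹).symm ((Q ^ N) x)).coeff g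
      = (C ^ N) (((HahnModule.of 𝔹).symm x).coeff g) := (main N).2 g le_rfl
  rw [hQN] at hle
  have hini : ini x = ((HahnModule.of 𝔹).symm x).coeff g := by
    rw [ini, HahnSeries.leadingCoeff_eq]
  rw [hini, ← hle]
  simp
end

section
/- Lemma 3.11 (first claim): Assume the flow φ is contracting. Then for every compact set K ⊆ Y there exists a compact set K' ⊆ Y such that for all y ∈ Y and all real numbers a ≤ b, if φ(a, y) ∈ K and φ(b, y) ∈ K, then φ(t, y) ∈ K' for every t ∈ [a, b]. (Equivalently: there is no sequence of flow segments with both endpoints in K which escapes every compact subset of Y.) -/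
/-- Lemma 3.11 (first claim): for a contracting continuous flow `φ` on a locally compact,
σ-compact Hausdorff space `Y`, flow segments with both endpoints in a compact set `K` stay
inside a single compact set `K'`: no sequence of such segments can escape every compact set. -/
theorem flow_segments_bounded {Y : Type*} [TopologicalSpace Y] [LocallyCompactSpace Y]
    [SigmaCompactSpace Y] [T2Space Y]
    (φ : ℝ → Y → Y) (hcont : Continuous fun p : ℝ × Y => φ p.1 p.2)
    (h0 : ∀ y, φ 0 y = y) (hadd : ∀ s t y, φ (s + t) y = φ s (φ t y))
    (hcontr : ∃ C : Set Y, IsCompact C ∧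
      ∀ y : Y, ∃ T : ℝ, 0 ≤ T ∧ ∀ t : ℝ, T ≤ t → φ (-t) y ∈ C) :
    ∀ K : Set Y, IsCompact K → ∃ K' : Set Y, IsCompact K' ∧
      ∀ (y : Y) (a b : ℝ), a ≤ b → φ a y ∈ K → φ b y ∈ K →
        ∀ t ∈ Set.Icc a b, φ t y ∈ K' := by
  intro K hK
  obtain ⟨C, hCcomp, hCprop⟩ := hcontr
  -- choose escape times, bounded below by 1
  choose T0 hT00 hT0 using hCprop
  set Tf : Y → ℝ := fun y => max 1 (T0 y) with hTfdef
  have hTf1 : ∀ y, (1:ℝ) ≤ Tf y := fun y => le_max_left _ _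
  have hTfprop : ∀ y, ∀ s : ℝ, Tf y ≤ s → φ (-s) y ∈ C := fun y s hs =>
    hT0 y s (le_trans (le_max_right _ _) hs)
  -- compact neighborhood L of C
  obtain ⟨L, hLcomp, hCL⟩ := exists_compact_superset hCcomp
  have hcontφ : ∀ r : ℝ, Continuous fun z => φ r z := fun r =>
    hcont.comp (continuous_const.prodMk continuous_id)
  have hcontφ2 : Continuous fun p : ℝ × Y => φ (-p.1) p.2 :=
    hcont.comp ((continuous_neg.comp continuous_fst).prodMk continuous_snd)
  -- finite subcover of L
  have hcover : ∀ x ∈ L, (fun z => φ (-(Tf x)) z) ⁻¹' interior L ∈ nhds x := by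
    intro x _
    exact IsOpen.mem_nhds (isOpen_interior.preimage (hcontφ _))
      (hCL (hTfprop x (Tf x) le_rfl))
  obtain ⟨t, _, htcov⟩ := hLcomp.elim_nhds_subcover _ hcover
  set T : ℝ := ∑ c ∈ t, Tf c with hTdef
  have hTle : ∀ c ∈ t, Tf c ≤ T := by
    intro c hc
    exact Finset.single_le_sum (fun i _ => le_trans zero_le_one (hTf1 i)) hc
  have hT0' : (0:ℝ) ≤ T :=
    Finset.sum_nonneg fun i _ => le_trans zero_le_one (hTf1 i)
  set M : Set Y := (fun p : ℝ × Y => φ (-p.1) p.2) '' (Set.Icc 0 T ×ˢ L) with hMdef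
  have hMcomp : IsCompact M := (isCompact_Icc.prod hLcomp).image hcontφ2
  -- key: backward orbits of L stay in M
  have key : ∀ n : ℕ, ∀ s : ℝ, 0 ≤ s → s ≤ n → ∀ z ∈ L, φ (-s) z ∈ M := by
    intro n
    induction n with
    | zero =>
        intro s hs0 hsn z hz
        have : s = 0 := le_antisymm (by exact_mod_cast hsn) hs0
        subst this
        exact ⟨(0, z), ⟨⟨le_rfl, hT0'⟩, hz⟩, rfl⟩
    | succ n ih =>
        intro s hs0 hsn z hz
        rcases le_or_gt s T with hsT | hsT
        · exact ⟨(s, z), ⟨⟨hs0, hsT⟩, hz⟩, rfl⟩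
        · obtain ⟨c, hct, hzc⟩ := Set.mem_iUnion₂.1 (htcov hz)
          have hzc' : φ (-(Tf c)) z ∈ L := interior_subset hzc
          have heq : φ (-s) z = φ (-(s - Tf c)) (φ (-(Tf c)) z) := by
            rw [← hadd]; ring_nf
          rw [heq]
          refine ih (s - Tf c) ?_ ?_ _ hzc'
          · linarith [hTle c hct, hsT]
          · have h1 : (1:ℝ) ≤ Tf c := hTf1 c
            have : s ≤ (n:ℝ) + 1 := by exact_mod_cast hsn
            linarith
  have key' : ∀ s : ℝ, 0 ≤ s → ∀ z ∈ L, φ (-s) z ∈ M := fun s hs z hz =>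
    key ⌈s⌉₊ s hs (Nat.le_ceil s) z hz
  -- finite subcover of K
  have hcoverK : ∀ x ∈ K, (fun z => φ (-(Tf x)) z) ⁻¹' interior L ∈ nhds x := by
    intro x _
    exact IsOpen.mem_nhds (isOpen_interior.preimage (hcontφ _))
      (hCL (hTfprop x (Tf x) le_rfl))
  obtain ⟨t', _, htcov'⟩ := hK.elim_nhds_subcover _ hcoverK
  set T' : ℝ := ∑ c ∈ t', Tf c with hT'def
  have hTle' : ∀ c ∈ t', Tf c ≤ T' := by
    intro c hc
    exact Finset.single_le_sum (fun i _ => le_trans zero_le_one (hTf1 i)) hc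
  have hT0'' : (0:ℝ) ≤ T' :=
    Finset.sum_nonneg fun i _ => le_trans zero_le_one (hTf1 i)
  set N : Set Y := (fun p : ℝ × Y => φ (-p.1) p.2) '' (Set.Icc 0 T' ×ˢ K) with hNdef
  have hNcomp : IsCompact N := (isCompact_Icc.prod hK).image hcontφ2
  refine ⟨N ∪ M, hNcomp.union hMcomp, ?_⟩
  have keyK : ∀ k ∈ K, ∀ s : ℝ, 0 ≤ s → φ (-s) k ∈ N ∪ M := by
    intro k hk s hs0
    rcases le_or_gt s T' with hsT | hsT
    · exact Or.inl ⟨(s, k), ⟨⟨hs0, hsT⟩, hk⟩, rfl⟩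
    · obtain ⟨c, hct, hkc⟩ := Set.mem_iUnion₂.1 (htcov' hk)
      have hkc' : φ (-(Tf c)) k ∈ L := interior_subset hkc
      have heq : φ (-s) k = φ (-(s - Tf c)) (φ (-(Tf c)) k) := by
        rw [← hadd]; ring_nf
      rw [heq]
      exact Or.inr (key' (s - Tf c) (by linarith [hTle' c hct]) _ hkc')
  intro y a b _ _ hb u hu
  have heq : φ u y = φ (-(b - u)) (φ b y) := by
    rw [← hadd]; ring_nf
  rw [heq]
  exact keyK _ hb (b - u) (by linarith [hu.2])
end

section
/- Lemma 3.11 (second claim, flowlines uniformly diverge near a divergent flowline): Assume the flow φ is contracting. Let p ∈ Y and suppose there is a sequence c_n → +∞ of real numbers such that the points φ(c_n, p) eventually leave every compact set (for each compact K ⊆ Y there is N with φ(c_n, p) ∉ K for all n ≥ N). Then there is a neighbourhood U of p such that for every compact set K ⊆ Y there exists τ ≥ 0 with φ(t, u) ∉ K for all u ∈ U and all t ≥ τ. -/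
/-- Lemma 3.11 (second claim): for a contracting continuous flow `φ` on a locally compact,
σ-compact Hausdorff space `Y`, flowlines uniformly diverge to infinity near a divergent
flowline: if the flowline of `p` eventually leaves every compact set along a sequence of times
`c n → +∞`, then there is a neighbourhood `U` of `p` such that for every compact `K` there is a
time `τ ≥ 0` after which the forward flow of all of `U` avoids `K`. -/
theorem flow_uniformly_diverges {Y : Type*} [TopologicalSpace Y] [LocallyCompactSpace Y]
    [SigmaCompactSpace Y] [T2Space Y]
    (φ : ℝ → Y → Y) (hcont : Continuous fun p : ℝ × Y => φ p.1 p.2)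
    (h0 : ∀ y, φ 0 y = y) (hadd : ∀ s t y, φ (s + t) y = φ s (φ t y))
    (hcontr : ∃ C : Set Y, IsCompact C ∧
      ∀ y : Y, ∃ T : ℝ, 0 ≤ T ∧ ∀ t : ℝ, T ≤ t → φ (-t) y ∈ C)
    (p : Y) (c : ℕ → ℝ) (hc : Filter.Tendsto c Filter.atTop Filter.atTop)
    (hdiv : ∀ K : Set Y, IsCompact K → ∃ N : ℕ, ∀ n ≥ N, φ (c n) p ∉ K) :
    ∃ U ∈ nhds p, ∀ K : Set Y, IsCompact K → ∃ τ : ℝ, 0 ≤ τ ∧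
      ∀ u ∈ U, ∀ t : ℝ, τ ≤ t → φ t u ∉ K := by
  obtain ⟨C, hC, habs⟩ := hcontr
  -- continuity of each time-t map
  have hct : ∀ t : ℝ, Continuous (fun y => φ t y) := fun t =>
    hcont.comp (Continuous.prodMk_right t)
  -- a compact set L whose interior contains C
  obtain ⟨L, hL, hCL⟩ := exists_compact_superset hC
  -- Lemma A: uniform hitting of interior L for backward orbits from a compact set
  have lemA : ∀ K : Set Y, IsCompact K → ∃ n : ℕ, ∀ y ∈ K,
      ∃ t : ℝ, 0 ≤ t ∧ t ≤ (n : ℝ) ∧ φ (-t) y ∈ interior L := by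
    intro K hK
    set O : ℕ → Set Y :=
      fun n => ⋃ t ∈ Set.Icc (0:ℝ) (n:ℝ), (fun y => φ (-t) y) ⁻¹' interior L with hO
    have hOopen : ∀ n, IsOpen (O n) := fun n =>
      isOpen_biUnion fun t _ => isOpen_interior.preimage (hct (-t))
    have hcover : K ⊆ ⋃ n, O n := by
      intro y _
      obtain ⟨T, hT0, hT⟩ := habs y
      refine Set.mem_iUnion.mpr ⟨⌈T⌉₊, ?_⟩
      exact Set.mem_biUnion ⟨hT0, Nat.le_ceil T⟩ (hCL (hT T le_rfl))
    obtain ⟨s, hs⟩ := hK.elim_finite_subcover O hOopen hcover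
    refine ⟨s.sup id, ?_⟩
    intro y hy
    obtain ⟨i, hi, hyi⟩ := Set.mem_iUnion₂.mp (hs hy)
    obtain ⟨t, ht, hyt⟩ := Set.mem_iUnion₂.mp hyi
    refine ⟨t, ht.1, ?_, hyt⟩
    calc t ≤ (i : ℝ) := ht.2
      _ ≤ ((s.sup id : ℕ) : ℝ) := by exact_mod_cast Finset.le_sup (f := id) hi
  -- Shifted lemma: hitting time at least 1
  have lemA' : ∀ K : Set Y, IsCompact K → ∃ n : ℕ, ∀ y ∈ K,
      ∃ t : ℝ, 1 ≤ t ∧ t ≤ (n : ℝ) ∧ φ (-t) y ∈ interior L := by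
    intro K hK
    obtain ⟨n, hn⟩ := lemA ((fun y => φ (-1) y) '' K) (hK.image (hct (-1)))
    refine ⟨n + 1, ?_⟩
    intro y hy
    obtain ⟨t, ht0, htn, htV⟩ := hn (φ (-1) y) ⟨y, hy, rfl⟩
    refine ⟨t + 1, by linarith, by push_cast; linarith, ?_⟩
    rw [show (-(t+1) : ℝ) = -t + -1 by ring, hadd]
    exact htV
  obtain ⟨n₂, hn₂⟩ := lemA' L hL
  -- Stay lemma: backward orbits from L stay in D
  have stay : ∀ m : ℕ, ∀ y ∈ L, ∀ t : ℝ, 0 ≤ t → t ≤ (m : ℝ) →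
      ∃ s : ℝ, 0 ≤ s ∧ s ≤ (n₂ : ℝ) ∧ ∃ w ∈ L, φ (-t) y = φ (-s) w := by
    intro m
    induction m with
    | zero =>
      intro y hy t ht0 htm
      refine ⟨t, ht0, ?_, y, hy, rfl⟩
      have : t ≤ 0 := by exact_mod_cast htm
      have : (0:ℝ) ≤ (n₂ : ℝ) := by positivity
      linarith
    | succ m ih =>
      intro y hy t ht0 htm
      by_cases hcase : t ≤ (n₂ : ℝ)
      · exact ⟨t, ht0, hcase, y, hy, rfl⟩
      · push_neg at hcase
        obtain ⟨τ, hτ1, hτn, hτV⟩ := hn₂ y hy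
        have hy' : φ (-τ) y ∈ L := interior_subset hτV
        have htm' : t ≤ (m : ℝ) + 1 := by push_cast at htm; linarith
        obtain ⟨s, hs0, hsn, w, hw, heq⟩ :=
          ih (φ (-τ) y) hy' (t - τ) (by linarith) (by linarith)
        refine ⟨s, hs0, hsn, w, hw, ?_⟩
        rw [show (-t : ℝ) = -(t - τ) + -τ by ring, hadd, heq]
  -- the absorbing compact set D
  set D : Set Y := (fun q : ℝ × Y => φ q.1 q.2) '' (Set.Icc (-(n₂:ℝ)) 0 ×ˢ L) with hD
  have hDc : IsCompact D := (isCompact_Icc.prod hL).image hcont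
  -- uniform absorption into D
  have absorb : ∀ K : Set Y, IsCompact K → ∃ T : ℝ, ∀ y ∈ K, ∀ t : ℝ, T ≤ t →
      φ (-t) y ∈ D := by
    intro K hK
    obtain ⟨nK, hnK⟩ := lemA K hK
    refine ⟨(nK : ℝ), ?_⟩
    intro y hy t ht
    obtain ⟨t₀, ht₀0, ht₀n, ht₀V⟩ := hnK y hy
    obtain ⟨s, hs0, hsn, w, hw, heq⟩ :=
      stay ⌈t - t₀⌉₊ (φ (-t₀) y) (interior_subset ht₀V) (t - t₀)
        (by linarith) (Nat.le_ceil _)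
    rw [show (-t : ℝ) = -(t - t₀) + -t₀ by ring, hadd, heq]
    refine ⟨(-s, w), Set.mk_mem_prod ?_ hw, rfl⟩
    exact Set.mem_Icc.mpr ⟨by linarith, by linarith⟩
  -- choose N with φ (c N) p ∉ D
  obtain ⟨N, hN⟩ := hdiv D hDc
  refine ⟨(fun u => φ (c N) u) ⁻¹' Dᶜ, ?_, ?_⟩
  · exact (hDc.isClosed.isOpen_compl.preimage (hct (c N))).mem_nhds (hN N le_rfl)
  · intro K hK
    obtain ⟨T, hT⟩ := absorb K hK
    refine ⟨max 0 (T + c N), le_max_left _ _, ?_⟩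
    intro u hu t ht hKmem
    have h2 : T ≤ t - c N := by
      have := le_trans (le_max_right 0 (T + c N)) ht
      linarith
    have h3 := hT (φ t u) hKmem (t - c N) h2
    have h4 : φ (-(t - c N)) (φ t u) = φ (c N) u := by
      rw [← hadd, show (-(t - c N) + t : ℝ) = c N by ring]
    rw [h4] at h3
    exact hu h3
end

section
/- Proposition 3.14 (topological core): Let Y be a topological space and A ⊆ Y. Assume (i) A is a deformation retract of some neighbourhood N of A: there is a continuous h : N × [0,1] → N with h(x, 0) = x for all x ∈ N, h(x, 1) ∈ A for all x ∈ N, and h(a, t) = a for all a ∈ A and t ∈ [0,1]; and (ii) for every neighbourhood W of A there is a continuous H : Y × [0,1] → Y with H(y, 0) = y and H(y, 1) ∈ W for all y ∈ Y, and H(a, t) = a for all a ∈ A and t ∈ [0,1]. Then A is a deformation retract of Y: there is a continuous G : Y × [0,1] → Y with G(y, 0) = y and G(y, 1) ∈ A for all y ∈ Y, and G(a, t) = a for all a ∈ A and t ∈ [0,1]. -/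
/-- Proposition 3.14 (topological core): if `A ⊆ Y` is a deformation retract of some
neighbourhood `N` of `A`, and `Y` can be deformed rel `A` into every neighbourhood `W` of `A`,
then `A` is a deformation retract of `Y`. -/
theorem deformation_retract_of_core {Y : Type*} [TopologicalSpace Y] (A N : Set Y)
    (hAN : A ⊆ interior N)
    (h : ↥N × unitInterval → ↥N) (hcont : Continuous h)
    (h_zero : ∀ x : ↥N, h (x, 0) = x)
    (h_one : ∀ x : ↥N, (h (x, 1) : Y) ∈ A)
    (h_rel : ∀ a : ↥N, (a : Y) ∈ A → ∀ t : unitInterval, h (a, t) = a)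
    (hII : ∀ W : Set Y, A ⊆ interior W →
      ∃ H : Y × unitInterval → Y, Continuous H ∧ (∀ y, H (y, 0) = y) ∧
        (∀ y, H (y, 1) ∈ W) ∧ ∀ a ∈ A, ∀ t : unitInterval, H (a, t) = a) :
    ∃ G : Y × unitInterval → Y, Continuous G ∧ (∀ y, G (y, 0) = y) ∧
      (∀ y, G (y, 1) ∈ A) ∧ ∀ a ∈ A, ∀ t : unitInterval, G (a, t) = a := by
  have hAintN : A ⊆ interior (interior N) := by rwa [interior_interior]
  obtain ⟨H, Hcont, H0, H1, Hrel⟩ := hII (interior N) hAintN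
  have hNmem : ∀ y : Y, H (y, 1) ∈ N := fun y => interior_subset (H1 y)
  let σ : Y → ↥N := fun y => ⟨H (y, 1), hNmem y⟩
  have σcont : Continuous σ :=
    Continuous.subtype_mk (Hcont.comp (continuous_id.prodMk continuous_const)) _
  let π : ℝ → unitInterval := Set.projIcc 0 1 zero_le_one
  have πcont : Continuous π := continuous_projIcc
  have π1 : π 1 = 1 := by simp [π, Set.projIcc]
  have π0 : π 0 = 0 := by simp [π, Set.projIcc]
  let τ : Y × unitInterval → ℝ := fun p => (p.2 : ℝ)
  have τcont : Continuous τ := continuous_subtype_val.comp continuous_snd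
  let f : Y × unitInterval → Y := fun p => H (p.1, π (2 * τ p))
  let g : Y × unitInterval → Y := fun p => (h (σ p.1, π (2 * τ p - 1)) : Y)
  have fcont : Continuous f :=
    Hcont.comp (continuous_fst.prodMk (πcont.comp ((continuous_const.mul τcont))))
  have gcont : Continuous g :=
    continuous_subtype_val.comp (hcont.comp ((σcont.comp continuous_fst).prodMk
      (πcont.comp ((continuous_const.mul τcont).sub continuous_const))))
  have key : ∀ p : Y × unitInterval, τ p = 1/2 → f p = g p := by
    intro p hp
    have h2 : (2 : ℝ) * τ p = 1 := by rw [hp]; ring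
    have h2' : (2 : ℝ) * τ p - 1 = 0 := by rw [hp]; ring
    simp only [f, g]
    rw [h2', h2, π1, π0, h_zero]
  refine ⟨fun p => if τ p ≤ 1/2 then f p else g p, ?_, ?_, ?_, ?_⟩
  · exact Continuous.if_le fcont gcont τcont continuous_const key
  · intro y
    have hτ : τ (y, (0 : unitInterval)) = 0 := rfl
    show (if τ (y, (0:unitInterval)) ≤ 1/2 then f (y, 0) else g (y, 0)) = y
    rw [if_pos (by rw [hτ]; norm_num)]
    show H (y, π (2 * τ (y, 0))) = y
    rw [hτ]; norm_num [π0, H0]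
  · intro y
    have hτ : τ (y, (1 : unitInterval)) = 1 := rfl
    show (if τ (y, (1:unitInterval)) ≤ 1/2 then f (y, 1) else g (y, 1)) ∈ A
    rw [if_neg (by rw [hτ]; norm_num)]
    show (h (σ y, π (2 * τ (y, 1) - 1)) : Y) ∈ A
    rw [hτ]
    norm_num [π1]
    exact h_one _
  · intro a ha t
    show (if τ (a, t) ≤ 1/2 then f (a, t) else g (a, t)) = a
    by_cases ht : τ (a, t) ≤ 1/2
    · rw [if_pos ht]
      exact Hrel a ha _
    · rw [if_neg ht]
      have hσa : σ a = ⟨a, interior_subset (hAN ha)⟩ := by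
        simp [σ, Hrel a ha 1]
      show (h (σ a, π (2 * τ (a, t) - 1)) : Y) = a
      rw [hσa, h_rel ⟨a, interior_subset (hAN ha)⟩ ha]
end
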